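/- Every reward function is equivalent (up to addition of a function of the prompt only) to one of the form β·log π(y|x) for some policy π: given any reward r : X × Y → ℝ and β > 0, the function r'(x,y) = r(x,y) - β·log Z(x), where Z(x) = Σ_y exp(r(x,y)/β), satisfies r'(x,y) = β·log π_r(y|x) where π_r is the Gibbs policy induced by r, and r - r' is a function of x alone. -/
import Mathlib


theorem reward_reparameterization {X Y : Type*} [Fintype Y] [Nonempty Y]
    (β : ℝ) (hβ : 0 < β) (r : X × Y → ℝ)
    (Z : X → ℝ) (hZ : ∀ x, Z x = ∑ y : Y, Real.exp (r (x, y) / β))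
    (πr : X → Y → ℝ) (hπ : ∀ x y, πr x y = Real.exp (r (x, y) / β) / Z x)
    (r' : X × Y → ℝ) (hr' : ∀ x y, r' (x, y) = r (x, y) - β * Real.log (Z x)) :
    (∀ x y, r' (x, y) = β * Real.log (πr x y)) ∧
    (∃ f : X → ℝ, ∀ x y, r (x, y) - r' (x, y) = f x) := by
  have hZpos : ∀ x, 0 < Z x := by
    intro x
    rw [hZ]
    exact Finset.sum_pos (fun y _ => Real.exp_pos _) Finset.univ_nonempty
  refine ⟨fun x y => ?_, ⟨fun x => β * Real.log (Z x), fun x y => by rw [hr']; ring⟩⟩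
  rw [hr', hπ, Real.log_div (Real.exp_ne_zero _) (ne_of_gt (hZpos x)), Real.log_exp]
  field_simp
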